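/- If D is a conjunction of linear inequality constraints s^{p_i} α_i ≤ s^{q_i} β_i whose dependency graph contains an increasing cycle (a cycle whose total cost, i.e., the sum of labels p−q along its edges, is strictly positive), then every solution φ of D maps every variable occurring in the cycle to a size expression whose normal form is ∞. -/

import Mathlib

/-- Size expressions of the size algebra A: a ::= α | s a | ∞. -/
inductive SExpr : Type
  | var : ℕ → SExpr
  | s : SExpr → SExpr
  | infty : SExpr
deriving DecidableEq

/-- The quasi-ordering ≤_A on size expressions. -/
inductive SLe : SExpr → SExpr → Prop
  | refl (a) : SLe a a
  | trans {a b c} : SLe a b → SLe b c → SLe a c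
  | mon {a b} : SLe a b → SLe (.s a) (.s b)
  | succ {a b} : SLe a b → SLe a (.s b)
  | infty (a) : SLe a .infty

/-- Normal form w.r.t. the rewrite rule s∞ → ∞. -/
def nf : SExpr → SExpr
  | .var α => .var α
  | .infty => .infty
  | .s a =>
    match nf a with
    | .infty => .infty
    | b => .s b

/-- Action of a size substitution on size expressions. -/
def subst (φ : ℕ → SExpr) : SExpr → SExpr
  | .var α => φ α
  | .s a => .s (subst φ a)
  | .infty => .infty

/-- A linear inequality constraint s^p α ≤ s^q β between size variables. -/
structure LinIneq : Type where
  p : ℕ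
  α : ℕ
  q : ℕ
  β : ℕ

/-- φ solves the linear inequality s^p α ≤ s^q β. -/
def SolvesLin (φ : ℕ → SExpr) (e : LinIneq) : Prop :=
  SLe (SExpr.s^[e.p] (φ e.α)) (SExpr.s^[e.q] (φ e.β))

/-- A cycle of a conjunction D of linear inequalities: a nonempty list of
constraints of D whose edges α →^{p−q} β chain up cyclically. -/
def IsCycle (D L : List LinIneq) : Prop :=
  L ≠ [] ∧ (∀ e ∈ L, e ∈ D) ∧
  ∀ i : Fin L.length,
    (L.get i).β = (L.get ⟨(i + 1) % L.length, Nat.mod_lt _ i.pos⟩).α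

/-- The cost of a list of edges: the sum of the labels p − q. -/
def cost (L : List LinIneq) : ℤ :=
  (L.map (fun e => (e.p : ℤ) - (e.q : ℤ))).sum

/-! Measure a size expression by its height in `ℕ∞` (the number of `s`, with `∞` at `⊤`):
`≤_A` is monotone for the height, and a normal form is `∞` exactly when the height is `⊤`.
Along the cycle a solution therefore yields heights with `hᵢ + pᵢ ≤ hᵢ₊₁ + qᵢ`. If they were
all finite, summing around the cycle would telescope to `cost ≤ 0`; so one of them is `⊤`, and
the same inequalities carry `⊤` around the whole cycle. -/

namespace SExpr

def height : SExpr → ℕ∞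
  | .var _ => 0
  | .s a => a.height + 1
  | .infty => ⊤

@[simp] lemma height_s (a : SExpr) : (s a).height = a.height + 1 := rfl

lemma height_iterate_s (k : ℕ) (a : SExpr) : (s^[k] a).height = a.height + k := by
  induction k with
  | zero => simp
  | succ k ih => rw [Function.iterate_succ_apply', height_s, ih, Nat.cast_succ, add_assoc]

end SExpr

open SExpr

lemma nf_s_eq_infty_iff (a : SExpr) : nf (.s a) = .infty ↔ nf a = .infty := by
  rw [nf]
  split <;> simp_all

lemma nf_eq_infty_iff_height_eq_top (a : SExpr) : nf a = .infty ↔ a.height = ⊤ := by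
  induction a with
  | var => simp [nf, height]
  | s a ih => simp [nf_s_eq_infty_iff, ih]
  | infty => simp [nf, height]

lemma SLe.height_le {a b : SExpr} (h : SLe a b) : a.height ≤ b.height := by
  induction h with
  | refl => exact le_rfl
  | trans _ _ hab hbc => exact hab.trans hbc
  | mon _ ih => exact add_le_add_left ih 1
  | succ _ ih => exact ih.trans (le_add_right le_rfl)
  | infty => exact le_top

lemma SolvesLin.height_add_le {φ : ℕ → SExpr} {e : LinIneq} (h : SolvesLin φ e) :
    (φ e.α).height + e.p ≤ (φ e.β).height + e.q := by
  simpa only [height_iterate_s] using SLe.height_le h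

lemma IsCycle.β_eq_α_add_one {D L : List LinIneq} (hL : IsCycle D L) [NeZero L.length]
    (i : Fin L.length) : (L.get i).β = (L.get (i + 1)).α := by
  convert hL.2.2 i using 3
  ext
  simp [Fin.val_add]

section CyclicPotential

variable {n : ℕ} [NeZero n] {f : Fin n → ℕ∞} {p q : Fin n → ℕ}

lemma sum_sub_nonpos_of_cyclic_add_le (hf : ∀ i, f i + p i ≤ f (i + 1) + q i)
    (hfin : ∀ i, f i ≠ ⊤) : ∑ i, ((p i : ℤ) - q i) ≤ 0 := by
  set g : Fin n → ℕ := fun i => (f i).toNat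
  have hg : ∀ i, (p i : ℤ) - q i ≤ g (i + 1) - g i := fun i => by
    have h := hf i
    rw [← ENat.natCast_toNat (hfin i), ← ENat.natCast_toNat (hfin (i + 1))] at h
    have : g i + p i ≤ g (i + 1) + q i := by exact_mod_cast h
    omega
  calc ∑ i, ((p i : ℤ) - q i) ≤ ∑ i, ((g (i + 1) : ℤ) - g i) := Finset.sum_le_sum fun i _ => hg i
    _ = 0 := by
      rw [Finset.sum_sub_distrib, sub_eq_zero]
      exact Equiv.sum_comp (Equiv.addRight 1) fun i => (g i : ℤ)

lemma exists_eq_top_of_cyclic_add_le (hf : ∀ i, f i + p i ≤ f (i + 1) + q i)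
    (hcost : 0 < ∑ i, ((p i : ℤ) - q i)) : ∃ i, f i = ⊤ := by
  by_contra! hfin
  exact (sum_sub_nonpos_of_cyclic_add_le hf hfin).not_gt hcost

open Fin.NatCast in
lemma eq_top_of_cyclic_add_le (hf : ∀ i, f i + p i ≤ f (i + 1) + q i) {i₀ : Fin n}
    (hi₀ : f i₀ = ⊤) (i : Fin n) : f i = ⊤ := by
  have top_succ : ∀ j, f j = ⊤ → f (j + 1) = ⊤ := fun j hj => by
    have h := hf j
    rw [hj, top_add, top_le_iff, ENat.add_eq_top] at h
    exact h.resolve_right (ENat.natCast_ne_top _)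
  have top_add_natCast : ∀ k : ℕ, f (i₀ + k) = ⊤ := by
    intro k
    induction k with
    | zero => simpa using hi₀
    | succ k ih => simpa only [Nat.cast_succ, ← add_assoc] using top_succ _ ih
  simpa only [Fin.cast_val_eq_self, add_sub_cancel] using top_add_natCast (i - i₀ : Fin n)

end CyclicPotential

/-- If the dependency graph of D contains an increasing cycle (total cost > 0),
then every solution of D maps every variable of the cycle to an expression
whose normal form is ∞. -/
theorem cycle_vars_infty (D L : List LinIneq)
    (hcyc : IsCycle D L) (hcost : 0 < cost L)
    (φ : ℕ → SExpr) (hsol : ∀ e ∈ D, SolvesLin φ e) :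
    ∀ e ∈ L, nf (φ e.α) = .infty ∧ nf (φ e.β) = .infty := by
  have : NeZero L.length := ⟨(List.length_pos_iff.mpr hcyc.1).ne'⟩
  set f : Fin L.length → ℕ∞ := fun i => (φ (L.get i).α).height
  have hedge : ∀ i, f i + (L.get i).p ≤ f (i + 1) + (L.get i).q := fun i => by
    simpa only [f, ← hcyc.β_eq_α_add_one i] using
      (hsol _ (hcyc.2.1 _ (L.get_mem i))).height_add_le
  have hcost_sum : 0 < ∑ i, (((L.get i).p : ℤ) - (L.get i).q) := by
    rwa [cost, ← Fin.sum_univ_fun_getElem] at hcost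
  obtain ⟨i₀, hi₀⟩ := exists_eq_top_of_cyclic_add_le hedge hcost_sum
  intro e he
  obtain ⟨i, rfl⟩ := List.mem_iff_get.mp he
  rw [nf_eq_infty_iff_height_eq_top, nf_eq_infty_iff_height_eq_top, hcyc.β_eq_α_add_one i]
  exact ⟨eq_top_of_cyclic_add_le hedge hi₀ i, eq_top_of_cyclic_add_le hedge hi₀ (i + 1)⟩
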